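/- arXiv:1108.0034 — 2 statements merged into one kernel-verified Lean document; each statement's English description precedes it below -/
import Mathlib

section
/- Let c > 0, 0 ≤ λ < c²/4, α := c/2 + √(c²/4 − λ), and let β₃ > 0, ε > 0. Set δ₁ := αβ₃/(ε(2α − c)) and define u(r) := exp(−αr − δ₁(log r)^(−ε)) for r > 1. If m : (1,∞) → ℝ satisfies m(r) ≥ c − β₃/(r (log r)^(1+ε)) for all r ≥ r₀ (some r₀ > 1), then there exists r₁ ≥ r₀ such that −u''(r) − m(r)u'(r) − λu(r) ≥ 0 for all r ≥ r₁. -/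
/-! Write `u = exp φ` with `φ' = -α + s`, `s = εδ₁ / (r (log r)^(1+ε))`, so that
`-u'' - m u' - λ u = u · (-(φ'² + φ'') - m φ' - λ)`. Because `α² - cα + λ = 0` and
`(2α - c) εδ₁ = αβ₃`, the bound `m ≥ c - β₃ s / (εδ₁)` (usable since `φ' ≤ 0`) cancels every term of
order `s` in the bracket except `-φ'' ≥ s / r`, leaving at least `s (1/r - s) ≥ 0`; and `s ≤ 1/r`
as soon as `(log r)^(1+ε) ≥ εδ₁`. -/

open Real Filter Topology

theorem deriv_deriv_exp_comp {φ φ' : ℝ → ℝ} {r d : ℝ}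
    (hφ : ∀ᶠ x in 𝓝 r, HasDerivAt φ (φ' x) x) (hφ' : HasDerivAt φ' d r) :
    deriv (deriv fun x => exp (φ x)) r = exp (φ r) * (φ' r ^ 2 + d) := by
  have h : deriv (fun x => exp (φ x)) =ᶠ[𝓝 r] fun x => exp (φ x) * φ' x := by
    filter_upwards [hφ] with x hx using hx.exp.deriv
  rw [h.deriv_eq, (hφ.self_of_nhds.exp.fun_mul hφ').deriv]
  ring

theorem hasDerivAt_log_rpow_neg (ε : ℝ) {r : ℝ} (hr : 1 < r) :
    HasDerivAt (fun x => log x ^ (-ε)) (-ε * (r * log r ^ (1 + ε))⁻¹) r := by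
  have hL := log_pos hr
  convert (hasDerivAt_log (by linarith : r ≠ 0)).rpow_const (p := -ε) (Or.inl hL.ne') using 1
  rw [show -ε - 1 = -(1 + ε) by ring, rpow_neg hL.le, mul_inv]
  ring

theorem hasDerivAt_inv_mul_log_rpow (ε : ℝ) {r : ℝ} (hr : 1 < r) :
    HasDerivAt (fun x => (x * log x ^ (1 + ε))⁻¹)
      (-(r * log r ^ (1 + ε))⁻¹ * (1 + (1 + ε) / log r) / r) r := by
  have hr0 : r ≠ 0 := by linarith
  have hL := log_pos hr
  have hD := (hasDerivAt_id' r).fun_mul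
    ((hasDerivAt_log hr0).rpow_const (p := 1 + ε) (Or.inl hL.ne'))
  refine (hD.fun_inv (by positivity)).congr_deriv ?_
  rw [add_sub_cancel_left, rpow_add hL, rpow_one]
  field_simp

theorem supersolution_inequality {α c lam β s w m g' x : ℝ}
    (hroot : α ^ 2 - c * α + lam = 0) (hs : (2 * α - c) * s = α * β * w)
    (hβ : 0 ≤ β) (hw : 0 ≤ w) (hs0 : 0 ≤ s) (hsx : s ≤ x) (hsα : s ≤ α)
    (hg' : g' ≤ -(s * x)) (hm : c - β * w ≤ m) :
    0 ≤ -((-α + s) ^ 2 + g') - m * (-α + s) - lam := by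
  have hmg : m * (-α + s) ≤ (c - β * w) * (-α + s) :=
    mul_le_mul_of_nonpos_right hm (by linarith)
  nlinarith [mul_nonneg hs0 (sub_nonneg.2 hsx), mul_nonneg (mul_nonneg hβ hw) hs0]

theorem quadratic_root_of_eq_half_add_sqrt {c lam α : ℝ} (hlam : lam < c ^ 2 / 4)
    (hα : α = c / 2 + √(c ^ 2 / 4 - lam)) : α ^ 2 - c * α + lam = 0 ∧ c < 2 * α := by
  have hpos : 0 < c ^ 2 / 4 - lam := by linarith
  have hsq := sq_sqrt hpos.le
  have hsqrt := sqrt_pos.2 hpos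
  subst hα
  exact ⟨by linear_combination hsq, by linarith⟩

theorem eventually_supersolution_exp {α c lam β ε δ : ℝ} {m : ℝ → ℝ}
    (hroot : α ^ 2 - c * α + lam = 0) (hcoef : (2 * α - c) * (ε * δ) = α * β)
    (hα : 0 < α) (hβ : 0 ≤ β) (hε : 0 ≤ ε) (hδ : 0 ≤ δ)
    (hm : ∀ᶠ r in atTop, c - β / (r * log r ^ (1 + ε)) ≤ m r) :
    ∀ᶠ r in atTop, 0 ≤ -deriv (deriv fun x => exp (-α * x - δ * log x ^ (-ε))) r
      - m r * deriv (fun x => exp (-α * x - δ * log x ^ (-ε))) r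
      - lam * exp (-α * r - δ * log r ^ (-ε)) := by
  set w : ℝ → ℝ := fun x => (x * log x ^ (1 + ε))⁻¹
  have hφ : ∀ x, 1 < x → HasDerivAt (fun x => -α * x - δ * log x ^ (-ε))
      (-α + ε * δ * w x) x := fun x hx =>
    (((hasDerivAt_id' x).const_mul (-α)).sub
      ((hasDerivAt_log_rpow_neg ε hx).const_mul δ)).congr_deriv (by ring)
  have hLtop : Tendsto (fun r => log r ^ (1 + ε)) atTop atTop :=
    (tendsto_rpow_atTop (by linarith)).comp tendsto_log_atTop
  filter_upwards [eventually_gt_atTop 1, eventually_ge_atTop α⁻¹,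
    hLtop.eventually_ge_atTop (ε * δ), hm] with r hr hrα hkL hmr
  have hL := log_pos hr
  have hw0 : 0 ≤ w r := by positivity
  have hφ' := ((hasDerivAt_inv_mul_log_rpow ε hr).const_mul (ε * δ)).const_add (-α)
  rw [deriv_deriv_exp_comp (eventually_gt_nhds hr |>.mono hφ) hφ', (hφ r hr).exp.deriv]
  have hk0 : 0 ≤ ε * δ * w r := mul_nonneg (mul_nonneg hε hδ) hw0
  have hsx : ε * δ * w r ≤ r⁻¹ :=
    calc ε * δ * w r = r⁻¹ * (ε * δ / log r ^ (1 + ε)) := by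
          simp only [w, mul_inv]; ring
      _ ≤ r⁻¹ * 1 := by
          gcongr
          exact div_le_one_of_le₀ hkL (by positivity)
      _ = r⁻¹ := mul_one _
  have hg' : ε * δ * (-(r * log r ^ (1 + ε))⁻¹ * (1 + (1 + ε) / log r) / r)
      ≤ -(ε * δ * w r * r⁻¹) := by
    have hd : 0 ≤ (1 + ε) / log r := div_nonneg (by linarith) hL.le
    have hkx : 0 ≤ ε * δ * w r * r⁻¹ := mul_nonneg hk0 (inv_nonneg.2 (by linarith))
    calc _ = -(ε * δ * w r * r⁻¹) * (1 + (1 + ε) / log r) := by simp only [w]; ring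
      _ ≤ -(ε * δ * w r * r⁻¹) * 1 := mul_le_mul_of_nonpos_left (by linarith) (by linarith)
      _ = _ := mul_one _
  have key := supersolution_inequality (m := m r) hroot (by rw [← hcoef]; ring) hβ hw0 hk0 hsx
    (hsx.trans ((inv_le_comm₀ hα (by linarith)).1 hrα)) hg' (by rwa [div_eq_mul_inv] at hmr)
  nlinarith [mul_nonneg (exp_pos (-α * r - δ * log r ^ (-ε))).le key]

theorem stmt3_general (c lam β₃ ε r₀ : ℝ) (m : ℝ → ℝ)
    (hc : 0 < c) (hlam : lam < c^2/4)
    (hβ : 0 < β₃) (hε : 0 < ε)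
    (α δ₁ : ℝ) (hα : α = c/2 + Real.sqrt (c^2/4 - lam))
    (hδ : δ₁ = α*β₃/(ε*(2*α - c)))
    (u : ℝ → ℝ) (hu : ∀ r, u r = Real.exp (-α*r - δ₁*(Real.log r)^(-ε)))
    (hm : ∀ r, r₀ ≤ r → c - β₃/(r*(Real.log r)^(1+ε)) ≤ m r) :
    ∃ r₁, r₀ ≤ r₁ ∧ ∀ r, r₁ ≤ r →
      0 ≤ -(deriv (deriv u) r) - m r * deriv u r - lam * u r := by
  obtain ⟨hroot, hcα⟩ := quadratic_root_of_eq_half_add_sqrt hlam hα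
  have hα0 : 0 < α := by linarith
  have hkδ : (2 * α - c) * (ε * δ₁) = α * β₃ := by
    rw [hδ]
    field_simp [hε.ne', (by linarith : 2 * α - c ≠ 0)]
  have hδ0 : 0 ≤ δ₁ := by
    rw [hδ]
    exact div_nonneg (by positivity) (mul_nonneg hε.le (by linarith))
  obtain rfl : u = fun x => exp (-α * x - δ₁ * log x ^ (-ε)) := funext hu
  obtain ⟨a, ha⟩ := eventually_atTop.1 <| eventually_supersolution_exp hroot hkδ hα0 hβ.le hε.le hδ0
    (eventually_atTop.2 ⟨r₀, hm⟩)
  exact ⟨max r₀ a, le_max_left _ _, fun r hr => ha r (le_of_max_le_right hr)⟩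

theorem stmt3 (c lam β₃ ε r₀ : ℝ) (m : ℝ → ℝ)
    (hc : 0 < c) (hlam0 : 0 ≤ lam) (hlam : lam < c^2/4)
    (hβ : 0 < β₃) (hε : 0 < ε) (hr₀ : 1 < r₀)
    (α δ₁ : ℝ) (hα : α = c/2 + Real.sqrt (c^2/4 - lam))
    (hδ : δ₁ = α*β₃/(ε*(2*α - c)))
    (u : ℝ → ℝ) (hu : ∀ r, u r = Real.exp (-α*r - δ₁*(Real.log r)^(-ε)))
    (hm : ∀ r, r₀ ≤ r → c - β₃/(r*(Real.log r)^(1+ε)) ≤ m r) :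
    ∃ r₁, r₀ ≤ r₁ ∧ ∀ r, r₁ ≤ r →
      0 ≤ -(deriv (deriv u) r) - m r * deriv u r - lam * u r :=
  stmt3_general c lam β₃ ε r₀ m hc hlam hβ hε α δ₁ hα hδ u hu hm
end

section
/- Let c > 0, 0 ≤ λ < c²/4, α₀ := c/2 + √(c²/4 − λ), let C₁ > 0, δ > 0, and fix ε with 0 < ε < δ. Define v(r) := exp(−α₀r + (log r)^(−ε)) for r > 1. If m : (1,∞) → ℝ satisfies m(r) ≤ c + C₁/(r(log r)^(1+δ)) for r ≥ r₀ > 1, then there exists r₁ ≥ r₀ such that −v''(r) − m(r)v'(r) − λv(r) ≤ 0 for all r ≥ r₁. -/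
open Real Filter Topology

/-!
Write `v = exp φ` with `φ r = -α₀ r + (log r)^(-ε)`. Then `φ' = -(α₀ + w)` with
`w = ε (log r)^(-ε-1) / r`, and `φ'' ≥ 0`, so `-v'' - m v' - λ v = -v (φ'² + φ'' + m φ' + λ)`.
As `α₀` is a root of `a² - c a + λ`, the bound `m ≤ c + e` leaves
`(α₀ + w)² - (c + e)(α₀ + w) + λ ≥ 2 √(c²/4 - λ) w - e (α₀ + w)`. The gain `w` is of order
`(log r)^(-ε-1) / r` while the error `e = C₁ / (r (log r)^(1+δ))` is of order
`(log r)^(-1-δ) / r`, so the gain wins for large `r` because `ε < δ`.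
-/

lemma hasDerivAt_log_rpow (p : ℝ) {r : ℝ} (hr : 1 < r) :
    HasDerivAt (fun x => log x ^ p) (p * log r ^ (p - 1) / r) r :=
  ((hasDerivAt_log (by positivity)).rpow_const (Or.inl (log_pos hr).ne')).congr_deriv
    (by field_simp)

lemma hasDerivAt_log_rpow_div (p : ℝ) {r : ℝ} (hr : 1 < r) :
    HasDerivAt (fun x => log x ^ p / x) ((p * log r ^ (p - 1) - log r ^ p) / r ^ 2) r :=
  ((hasDerivAt_log_rpow p hr).div (hasDerivAt_id' r) (by positivity)).congr_deriv
    (by field_simp)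

lemma hasDerivAt_deriv_exp_comp {φ φ' : ℝ → ℝ} {φ'' r : ℝ}
    (hφ : ∀ᶠ x in 𝓝 r, HasDerivAt φ (φ' x) x) (hφ' : HasDerivAt φ' φ'' r) :
    HasDerivAt (deriv fun x => exp (φ x)) (exp (φ r) * (φ' r ^ 2 + φ'')) r := by
  have hderiv : deriv (fun x => exp (φ x)) =ᶠ[𝓝 r] fun x => exp (φ x) * φ' x :=
    hφ.mono fun x hx => hx.exp.deriv
  exact ((hφ.self_of_nhds.exp.mul hφ').congr_of_eventuallyEq hderiv).congr_deriv (by ring)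

noncomputable def barrier (α ε x : ℝ) : ℝ := exp (-α * x + log x ^ (-ε))

lemma barrier_pos (α ε x : ℝ) : 0 < barrier α ε x := exp_pos _

section Barrier

variable (α : ℝ) {ε r : ℝ}

lemma hasDerivAt_barrier_exponent (hr : 1 < r) :
    HasDerivAt (fun x => -α * x + log x ^ (-ε)) (-(α + ε * (log r ^ (-ε - 1) / r))) r :=
  (((hasDerivAt_id' r).const_mul (-α)).add (hasDerivAt_log_rpow (-ε) hr)).congr_deriv
    (by ring)

lemma hasDerivAt_barrier_exponent_deriv (hr : 1 < r) :
    HasDerivAt (fun x => -(α + ε * (log x ^ (-ε - 1) / x)))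
      (ε * ((ε + 1) * log r ^ (-ε - 2) + log r ^ (-ε - 1)) / r ^ 2) r := by
  have h := (((hasDerivAt_log_rpow_div (-ε - 1) hr).const_mul ε).const_add α).neg
  rw [show -ε - 1 - 1 = -ε - 2 by ring] at h
  exact h.congr_deriv (by ring)

lemma deriv_barrier (hr : 1 < r) :
    deriv (barrier α ε) r = -(barrier α ε r * (α + ε * (log r ^ (-ε - 1) / r))) := by
  unfold barrier
  rw [(hasDerivAt_barrier_exponent α hr).exp.deriv]
  ring

lemma exists_deriv_deriv_barrier_eq (hε : 0 ≤ ε) (hr : 1 < r) :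
    ∃ q, 0 ≤ q ∧ deriv (deriv (barrier α ε)) r
      = barrier α ε r * ((α + ε * (log r ^ (-ε - 1) / r)) ^ 2 + q) := by
  have hL : 0 < log r := log_pos hr
  refine ⟨ε * ((ε + 1) * log r ^ (-ε - 2) + log r ^ (-ε - 1)) / r ^ 2, by positivity, ?_⟩
  have hφ := (lt_mem_nhds hr).mono fun x hx => hasDerivAt_barrier_exponent α (ε := ε) hx
  unfold barrier
  rw [(hasDerivAt_deriv_exp_comp hφ (hasDerivAt_barrier_exponent_deriv α hr)).deriv]
  ring

end Barrier

lemma sq_sub_mul_add_eq_of_root (c lam w : ℝ) (hlam : lam ≤ c ^ 2 / 4) :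
    (c / 2 + √(c ^ 2 / 4 - lam) + w) ^ 2 - c * (c / 2 + √(c ^ 2 / 4 - lam) + w) + lam
      = 2 * √(c ^ 2 / 4 - lam) * w + w ^ 2 := by
  linear_combination sq_sqrt (sub_nonneg.2 hlam)

lemma eventually_curvature_error_le_gain (α : ℝ) {C s ε δ : ℝ} (hC : 0 ≤ C) (hs : 0 < s)
    (hε : 0 < ε) (hεδ : ε < δ) :
    ∀ᶠ r in atTop, C / (r * log r ^ (1 + δ)) * (α + ε * (log r ^ (-ε - 1) / r))
      ≤ 2 * s * (ε * (log r ^ (-ε - 1) / r)) := by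
  have hpow : ∀ᶠ r in atTop, C * (α + ε) / (2 * s * ε) ≤ log r ^ (δ - ε) :=
    ((tendsto_rpow_atTop (sub_pos.2 hεδ)).comp tendsto_log_atTop).eventually_ge_atTop _
  filter_upwards [hpow, eventually_ge_atTop (exp 1)] with r hpow hr
  have hr1 : 1 ≤ r := (one_le_exp zero_le_one).trans hr
  have hL : 1 ≤ log r := (le_log_iff_exp_le (by positivity)).2 hr
  have hw : ε * (log r ^ (-ε - 1) / r) ≤ ε :=
    mul_le_of_le_one_right hε.le <| div_le_one_of_le₀
      ((rpow_le_one_of_one_le_of_nonpos hL (by linarith)).trans hr1) (by positivity)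
  have hsplit : log r ^ (δ - ε) = log r ^ (-ε - 1) * log r ^ (1 + δ) := by
    rw [← rpow_add (by positivity)]; ring_nf
  calc C / (r * log r ^ (1 + δ)) * (α + ε * (log r ^ (-ε - 1) / r))
      ≤ C / (r * log r ^ (1 + δ)) * (α + ε) := by gcongr
    _ = C * (α + ε) / (2 * s * ε) * (2 * s * ε / (r * log r ^ (1 + δ))) := by field_simp
    _ ≤ log r ^ (δ - ε) * (2 * s * ε / (r * log r ^ (1 + δ))) := by gcongr
    _ = 2 * s * (ε * (log r ^ (-ε - 1) / r)) := by rw [hsplit]; field_simp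

theorem stmt5_general (c lam C₁ δ ε r₀ : ℝ) (m : ℝ → ℝ)
    (hc : 0 < c) (hlam : lam < c^2/4)
    (hC₁ : 0 < C₁) (hε : 0 < ε) (hεδ : ε < δ)
    (α₀ : ℝ) (hα : α₀ = c/2 + Real.sqrt (c^2/4 - lam))
    (v : ℝ → ℝ) (hv : ∀ r, v r = Real.exp (-α₀*r + (Real.log r)^(-ε)))
    (hm : ∀ r, r₀ ≤ r → m r ≤ c + C₁/(r*(Real.log r)^(1+δ))) :
    ∃ r₁, r₀ ≤ r₁ ∧ ∀ r, r₁ ≤ r →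
      -(deriv (deriv v) r) - m r * deriv v r - lam * v r ≤ 0 := by
  obtain rfl : v = barrier α₀ ε := funext hv
  have hs : 0 < √(c ^ 2 / 4 - lam) := sqrt_pos.2 (by linarith)
  have hα₀ : 0 < α₀ := by rw [hα]; positivity
  obtain ⟨r₁, hr₁⟩ := eventually_atTop.1 <|
    (eventually_gt_atTop 1).and (eventually_curvature_error_le_gain α₀ hC₁.le hs hε hεδ)
  refine ⟨max r₀ r₁, le_max_left _ _, fun r hr => ?_⟩
  obtain ⟨hr1, htail⟩ := hr₁ r (le_of_max_le_right hr)
  obtain ⟨q, hq, hderiv2⟩ := exists_deriv_deriv_barrier_eq α₀ hε.le hr1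
  rw [hderiv2, deriv_barrier α₀ hr1]
  set w := ε * (log r ^ (-ε - 1) / r)
  have hw : 0 ≤ w := by have hL := log_pos hr1; positivity
  have hroot := sq_sub_mul_add_eq_of_root c lam w hlam.le
  rw [← hα] at hroot
  have hmr : m r * (α₀ + w) ≤ (c + C₁ / (r * log r ^ (1 + δ))) * (α₀ + w) :=
    mul_le_mul_of_nonneg_right (hm r (le_of_max_le_left hr)) (by positivity)
  have hbracket : 0 ≤ (α₀ + w) ^ 2 + q - m r * (α₀ + w) + lam := by
    linarith [sq_nonneg w]
  linarith [mul_nonneg (barrier_pos α₀ ε r).le hbracket]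

theorem stmt5 (c lam C₁ δ ε r₀ : ℝ) (m : ℝ → ℝ)
    (hc : 0 < c) (hlam0 : 0 ≤ lam) (hlam : lam < c^2/4)
    (hC₁ : 0 < C₁) (hδ : 0 < δ) (hε : 0 < ε) (hεδ : ε < δ) (hr₀ : 1 < r₀)
    (α₀ : ℝ) (hα : α₀ = c/2 + Real.sqrt (c^2/4 - lam))
    (v : ℝ → ℝ) (hv : ∀ r, v r = Real.exp (-α₀*r + (Real.log r)^(-ε)))
    (hm : ∀ r, r₀ ≤ r → m r ≤ c + C₁/(r*(Real.log r)^(1+δ))) :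
    ∃ r₁, r₀ ≤ r₁ ∧ ∀ r, r₁ ≤ r →
      -(deriv (deriv v) r) - m r * deriv v r - lam * v r ≤ 0 :=
  stmt5_general c lam C₁ δ ε r₀ m hc hlam hC₁ hε hεδ α₀ hα v hv hm
end
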